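/- arXiv:2004.05581 — 2 statements merged into one kernel-verified Lean document; each statement's English description precedes it below -/
import Mathlib

section
/- Let G be a group, K a subgroup of G of finite index, α : G → ℂˣ a character of G, and (ρ, W) a representation of K on a finite-dimensional complex vector space W. Let V = { f : G → W | f(kg) = ρ(k)(f(g)) for all k ∈ K, g ∈ G } be the induced representation of ρ to G, on which G acts by (σ(g)f)(x) = f(xg). If B is a nondegenerate alternating bilinear form on W satisfying B(ρ(k)w, ρ(k)w') = α(k)·B(w,w') for all k ∈ K and w, w' ∈ W, then there exists a nondegenerate alternating bilinear form B̃ on V satisfying B̃(σ(g)f, σ(g)f') = α(g)·B̃(f,f') for all g ∈ G and f, f' ∈ V. (This is the α-symplectic case of Lemma 'lemma ref' of the paper: induction from a finite-index subgroup preserves α-symplecticity; the form B̃(f,f') = Σ_{Kg ∈ K\G} α(g)⁻¹·B(f(g), f'(g)) works.) -/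
/-!
The form is `B̃(f, f') = ∑_{Kg ∈ K\G} (α g)⁻¹ B(f g, f' g)`. The `α|_K`-equivariance of `B` makes
each summand depend only on the coset `K g`, so translating by `g` permutes the cosets and pulls
out the factor `α g`. For nondegeneracy, pair `f` with the function supported on the single coset
`K g₀` that takes a value `w` at a point `g₀` with `B(f g₀, w) ≠ 0`.
-/

/-- The space of the representation of `G` induced from a representation `ρ` of a subgroup
`K ≤ G` on `W`: the submodule of functions `f : G → W` with `f (k * g) = ρ k (f g)` for all
`k ∈ K`, `g ∈ G`. -/
def inducedSubmodule {G : Type*} [Group G] (K : Subgroup G) {W : Type*} [AddCommGroup W]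
    [Module ℂ W] (ρ : K →* (W ≃ₗ[ℂ] W)) : Submodule ℂ (G → W) where
  carrier := {f | ∀ (k : K) (g : G), f ((k : G) * g) = ρ k (f g)}
  add_mem' {f f'} hf hf' := fun k g => by
    simp only [Pi.add_apply, hf k g, hf' k g, map_add]
  zero_mem' := fun k g => by simp
  smul_mem' c f hf := fun k g => by
    simp only [Pi.smul_apply, hf k g, map_smul]

/-- The action of `g : G` on the induced space: `(σ g f) x = f (x * g)`. -/
def inducedAction {G : Type*} [Group G] (K : Subgroup G) {W : Type*} [AddCommGroup W]
    [Module ℂ W] (ρ : K →* (W ≃ₗ[ℂ] W)) (g : G) :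
    inducedSubmodule K ρ →ₗ[ℂ] inducedSubmodule K ρ where
  toFun f := ⟨fun x => (f : G → W) (x * g), fun k x => by
    simpa [mul_assoc] using f.2 k (x * g)⟩
  map_add' f f' := by ext x; simp
  map_smul' c f := by ext x; simp

universe u v

section

open QuotientGroup

variable {G : Type u} [Group G] (K : Subgroup G) {W : Type v} [AddCommGroup W] [Module ℂ W]
  (ρ : K →* (W ≃ₗ[ℂ] W))

variable {K ρ} in
theorem inducedSubmodule_apply_of_rightRel (f : inducedSubmodule K ρ) {x y : G}
    (h : rightRel K x y) : (f : G → W) y = ρ ⟨y * x⁻¹, rightRel_apply.mp h⟩ ((f : G → W) x) := by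
  simp [← f.2 ⟨y * x⁻¹, rightRel_apply.mp h⟩ x]

def inducedEval (g : G) : inducedSubmodule K ρ →ₗ[ℂ] W :=
  (LinearMap.proj g).comp (inducedSubmodule K ρ).subtype

@[simp]
theorem inducedEval_apply (g : G) (f : inducedSubmodule K ρ) :
    inducedEval K ρ g f = (f : G → W) g :=
  rfl

open Classical in
noncomputable def inducedSingle (g₀ : G) (w : W) : inducedSubmodule K ρ :=
  ⟨fun x => if h : x * g₀⁻¹ ∈ K then ρ ⟨x * g₀⁻¹, h⟩ w else 0, fun k x => by
    have hk : (k : G) * x * g₀⁻¹ ∈ K ↔ x * g₀⁻¹ ∈ K := by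
      rw [mul_assoc]; exact K.mul_mem_cancel_left k.2
    dsimp only
    by_cases h : x * g₀⁻¹ ∈ K
    · rw [dif_pos (hk.mpr h), dif_pos h, ← LinearEquiv.mul_apply, ← map_mul]
      congr 2
      ext
      simp [mul_assoc]
    · rw [dif_neg (mt hk.mp h), dif_neg h, map_zero]⟩

theorem inducedSingle_apply_self (g₀ : G) (w : W) :
    (inducedSingle K ρ g₀ w : G → W) g₀ = w := by
  have h : g₀ * g₀⁻¹ ∈ K := by simp
  have h1 : (⟨g₀ * g₀⁻¹, h⟩ : K) = 1 := Subtype.ext (mul_inv_cancel g₀)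
  simp only [inducedSingle, dif_pos h, h1, map_one]
  rfl

theorem inducedSingle_apply_of_not_rightRel {g₀ x : G} (w : W) (h : ¬ rightRel K g₀ x) :
    (inducedSingle K ρ g₀ w : G → W) x = 0 := by
  simp only [inducedSingle, dif_neg (mt rightRel_apply.mpr h)]

variable (α : G →* ℂˣ) (B : W →ₗ[ℂ] W →ₗ[ℂ] ℂ)

noncomputable def inducedPairingAt (g : G) :
    inducedSubmodule K ρ →ₗ[ℂ] inducedSubmodule K ρ →ₗ[ℂ] ℂ :=
  (α g : ℂ)⁻¹ • B.compl₁₂ (inducedEval K ρ g) (inducedEval K ρ g)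

@[simp]
theorem inducedPairingAt_apply (g : G) (f f' : inducedSubmodule K ρ) :
    inducedPairingAt K ρ α B g f f' = (α g : ℂ)⁻¹ * B ((f : G → W) g) ((f' : G → W) g) :=
  rfl

variable {K ρ α B}

theorem inducedPairingAt_eq_of_rightRel
    (hB : ∀ (k : K) (w w' : W), B (ρ k w) (ρ k w') = (α (k : G) : ℂ) * B w w')
    {x y : G} (h : rightRel K x y) :
    inducedPairingAt K ρ α B y = inducedPairingAt K ρ α B x := by
  ext f f'
  have hα : (α y : ℂ) = α (y * x⁻¹) * α x := by
    rw [← Units.val_mul, ← map_mul, inv_mul_cancel_right]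
  rw [inducedPairingAt_apply, inducedSubmodule_apply_of_rightRel f h,
    inducedSubmodule_apply_of_rightRel f' h, hB, inducedPairingAt_apply, hα]
  field_simp

theorem inducedPairingAt_inducedAction (x g : G) (f f' : inducedSubmodule K ρ) :
    inducedPairingAt K ρ α B x (inducedAction K ρ g f) (inducedAction K ρ g f') =
      (α g : ℂ) * inducedPairingAt K ρ α B (x * g) f f' := by
  simp only [inducedPairingAt_apply, map_mul, Units.val_mul, mul_inv]
  field_simp
  rfl

variable [K.FiniteIndex]

attribute [local instance] Subgroup.fintypeQuotientOfFiniteIndex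

-- Representatives of `K \ G` are picked by `Quotient.out`; for `α|_K`-equivariant `B` the
-- summands do not depend on that choice (`inducedPairingAt_eq_of_rightRel`).
variable (K ρ α B) in
noncomputable def inducedForm : inducedSubmodule K ρ →ₗ[ℂ] inducedSubmodule K ρ →ₗ[ℂ] ℂ :=
  ∑ q : Quotient (rightRel K), inducedPairingAt K ρ α B q.out

theorem inducedForm_self (hB : ∀ w, B w w = 0) (f : inducedSubmodule K ρ) :
    inducedForm K ρ α B f f = 0 := by
  simp [inducedForm, hB]

theorem inducedForm_inducedSingle
    (hB : ∀ (k : K) (w w' : W), B (ρ k w) (ρ k w') = (α (k : G) : ℂ) * B w w')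
    (f : inducedSubmodule K ρ) (g₀ : G) (w : W) :
    inducedForm K ρ α B f (inducedSingle K ρ g₀ w) = (α g₀ : ℂ)⁻¹ * B ((f : G → W) g₀) w := by
  have hg₀ : rightRel K g₀ (⟦g₀⟧ : Quotient (rightRel K)).out :=
    (rightRel K).symm' (Quotient.mk_out g₀)
  rw [inducedForm, LinearMap.sum_apply, LinearMap.sum_apply, Finset.sum_eq_single ⟦g₀⟧,
    inducedPairingAt_eq_of_rightRel hB hg₀, inducedPairingAt_apply, inducedSingle_apply_self]
  · intro q _ hq
    have hq' : ¬ rightRel K g₀ q.out := fun h => hq <| by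
      rw [← q.out_eq]; exact (Quotient.sound h).symm
    rw [inducedPairingAt_apply, inducedSingle_apply_of_not_rightRel K ρ w hq', map_zero, mul_zero]
  · simp

theorem inducedForm_nondegenerate
    (hB : ∀ (k : K) (w w' : W), B (ρ k w) (ρ k w') = (α (k : G) : ℂ) * B w w')
    (hnondeg : ∀ w : W, (∀ w' : W, B w w' = 0) → w = 0) (f : inducedSubmodule K ρ)
    (hf : ∀ f', inducedForm K ρ α B f f' = 0) : f = 0 := by
  ext g
  refine hnondeg _ fun w => ?_
  simpa [inducedForm_inducedSingle hB, (α g).ne_zero] using hf (inducedSingle K ρ g w)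

def rightCosetsMulRight (g : G) : Quotient (rightRel K) ≃ Quotient (rightRel K) :=
  Quotient.congr (Equiv.mulRight g) fun a b => by
    simp [rightRel_apply, mul_assoc]

theorem inducedForm_inducedAction
    (hB : ∀ (k : K) (w w' : W), B (ρ k w) (ρ k w') = (α (k : G) : ℂ) * B w w')
    (g : G) (f f' : inducedSubmodule K ρ) :
    inducedForm K ρ α B (inducedAction K ρ g f) (inducedAction K ρ g f') =
      (α g : ℂ) * inducedForm K ρ α B f f' := by
  simp only [inducedForm, LinearMap.sum_apply, inducedPairingAt_inducedAction, ← Finset.mul_sum]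
  congr 1
  refine Fintype.sum_equiv (rightCosetsMulRight g) _ _ fun q => ?_
  have hq : rightCosetsMulRight g q = ⟦q.out * g⟧ := by
    conv_lhs => rw [← q.out_eq]
    rfl
  rw [inducedPairingAt_eq_of_rightRel hB (hq ▸ Quotient.mk_out (q.out * g))]

end

theorem induced_symplectic_general
    {G : Type*} [Group G] (K : Subgroup G) (hK : K.FiniteIndex)
    {W : Type*} [AddCommGroup W] [Module ℂ W]
    (ρ : K →* (W ≃ₗ[ℂ] W)) (α : G →* ℂˣ)
    (B : W →ₗ[ℂ] W →ₗ[ℂ] ℂ)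
    (hnondeg : ∀ w : W, (∀ w' : W, B w w' = 0) → w = 0)
    (halt : ∀ w : W, B w w = 0)
    (hequiv : ∀ (k : K) (w w' : W), B (ρ k w) (ρ k w') = (α (k : G) : ℂ) * B w w') :
    ∃ Bt : inducedSubmodule K ρ →ₗ[ℂ] inducedSubmodule K ρ →ₗ[ℂ] ℂ,
      (∀ f : inducedSubmodule K ρ, (∀ f' : inducedSubmodule K ρ, Bt f f' = 0) → f = 0) ∧
      (∀ f : inducedSubmodule K ρ, Bt f f = 0) ∧
      (∀ (g : G) (f f' : inducedSubmodule K ρ),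
        Bt (inducedAction K ρ g f) (inducedAction K ρ g f') = (α g : ℂ) * Bt f f') :=
  ⟨inducedForm K ρ α B, fun f => inducedForm_nondegenerate hequiv hnondeg f,
    inducedForm_self halt, inducedForm_inducedAction hequiv⟩

/-- **Lemma (induction preserves `α`-symplecticity).** Let `K` be a finite-index subgroup of a
group `G`, `α : G → ℂˣ` a character, and `(ρ, W)` a finite-dimensional complex representation
of `K` carrying a nondegenerate alternating `α|_K`-equivariant bilinear form `B`. Then the
induced representation of `G` carries a nondegenerate alternating `α`-equivariant bilinear
form. -/
theorem induced_symplectic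
    {G : Type*} [Group G] (K : Subgroup G) (hK : K.FiniteIndex)
    {W : Type*} [AddCommGroup W] [Module ℂ W] [FiniteDimensional ℂ W]
    (ρ : K →* (W ≃ₗ[ℂ] W)) (α : G →* ℂˣ)
    (B : W →ₗ[ℂ] W →ₗ[ℂ] ℂ)
    (hnondeg : ∀ w : W, (∀ w' : W, B w w' = 0) → w = 0)
    (halt : ∀ w : W, B w w = 0)
    (hequiv : ∀ (k : K) (w w' : W), B (ρ k w) (ρ k w') = (α (k : G) : ℂ) * B w w') :
    ∃ Bt : inducedSubmodule K ρ →ₗ[ℂ] inducedSubmodule K ρ →ₗ[ℂ] ℂ,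
      (∀ f : inducedSubmodule K ρ, (∀ f' : inducedSubmodule K ρ, Bt f f' = 0) → f = 0) ∧
      (∀ f : inducedSubmodule K ρ, Bt f f = 0) ∧
      (∀ (g : G) (f f' : inducedSubmodule K ρ),
        Bt (inducedAction K ρ g f) (inducedAction K ρ g f') = (α g : ℂ) * Bt f f') :=
  induced_symplectic_general K hK ρ α B hnondeg halt hequiv
end

section
/- Let k ⊆ K be an extension of finite fields of degree n ≥ 4, with |k| = q odd, and let χ : Kˣ → ℂˣ be a regular character, i.e. χ ∘ σ ≠ χ for every non-identity field automorphism σ of K fixing k. Then there is no character α : kˣ → ℂˣ with χ² = α ∘ N_{K/k}, i.e. no α such that χ(x)² = α(N_{K/k}(x)) for all x ∈ Kˣ, where N_{K/k} is the field norm. (This is the step in the proof of Corollary 'corollary distinguished determines restriction to L0' of the paper ruling out the trivial Galois element: χ² = α ∘ N would force χ^{2(q−1)} = 1, hence χ^{q²−1} = 1, contradicting regularity since n ≥ 4.) -/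
/-! If `χ² = α ∘ N_{K/k}`, then `χ^{2(q-1)} = 1` because `kˣ` has order `q - 1`; as `q` is odd,
`2(q-1)` divides `q² - 1`, so `χ(x^{q²}) = χ(x)` for all `x`. Thus `χ` is fixed by the square of
the Frobenius, which is a non-trivial element of the Galois group since `[K : k] > 2`. -/

open FiniteField

theorem Nat.two_mul_sub_one_dvd_sq_sub_one_of_odd {q : ℕ} (hq : Odd q) :
    2 * (q - 1) ∣ q ^ 2 - 1 := by
  obtain ⟨m, rfl⟩ := hq
  exact ⟨m + 1, by rw [Nat.add_sub_cancel, Nat.sub_eq_of_eq_add]; ring⟩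

section

variable {k K G : Type*} [Field k] [Field K] [Fintype k] [Algebra k K] [Group G]

theorem pow_two_mul_card_sub_one_eq_one_of_sq_eq_comp_norm
    {χ : Kˣ →* G} {α : kˣ →* G}
    (hα : ∀ x : Kˣ, χ x ^ 2 = α (Units.map (Algebra.norm k : K →* k) x)) (x : Kˣ) :
    χ x ^ (2 * (Fintype.card k - 1)) = 1 := by
  classical
  rw [pow_mul, hα, ← map_pow, ← Fintype.card_units, pow_card_eq_one, map_one]

theorem comp_frobeniusAlgEquivOfAlgebraic_pow_eq_self [Algebra.IsAlgebraic k K]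
    {χ : Kˣ →* G} {m : ℕ} (hχ : ∀ x : Kˣ, χ x ^ (Fintype.card k ^ m - 1) = 1) :
    χ.comp (Units.map ((frobeniusAlgEquivOfAlgebraic k K ^ m : K ≃ₐ[k] K) : K →* K)) = χ := by
  ext x
  have hσx : Units.map ((frobeniusAlgEquivOfAlgebraic k K ^ m : K ≃ₐ[k] K) : K →* K) x =
      x ^ Fintype.card k ^ m := by
    ext
    simp [AlgEquiv.coe_pow, coe_frobeniusAlgEquivOfAlgebraic_iterate]
  have hpos : 1 ≤ Fintype.card k ^ m := Nat.one_le_pow _ _ Fintype.card_pos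
  rw [MonoidHom.comp_apply, hσx, map_pow, ← Nat.sub_add_cancel hpos, pow_succ, hχ, one_mul]

end

theorem FiniteField.frobeniusAlgEquivOfAlgebraic_pow_ne_one
    {k K : Type*} [Field k] [Field K] [Fintype k] [Finite K] [Algebra k K] {m : ℕ}
    (hm₀ : 0 < m) (hm : m < Module.finrank k K) :
    frobeniusAlgEquivOfAlgebraic k K ^ m ≠ 1 :=
  pow_ne_one_of_lt_orderOf hm₀.ne' (orderOf_frobeniusAlgEquivOfAlgebraic k K ▸ hm)

/-- **No square root of a norm-inflated character for regular characters.** Let `k ⊆ K` be an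
extension of finite fields of degree `n ≥ 4` with `|k| = q` odd, and let `χ : Kˣ → ℂˣ` be a
regular character, i.e. `χ ∘ σ ≠ χ` for every non-identity `k`-algebra automorphism `σ` of
`K`. Then there is no character `α : kˣ → ℂˣ` with `χ² = α ∘ N_{K/k}`, where `N_{K/k}` is
the field norm. -/
theorem not_exists_sq_eq_norm_comp_of_regular
    {k K : Type*} [Field k] [Field K] [Fintype k] [Fintype K] [Algebra k K]
    (hn : 4 ≤ Module.finrank k K) (hq : Odd (Fintype.card k))
    (χ : Kˣ →* ℂˣ)
    (hreg : ∀ σ : K ≃ₐ[k] K, σ ≠ AlgEquiv.refl →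
      χ.comp (Units.map (σ : K →* K)) ≠ χ) :
    ¬ ∃ α : kˣ →* ℂˣ, ∀ x : Kˣ, (χ x) ^ 2 = α (Units.map (Algebra.norm k : K →* k) x) := by
  rintro ⟨α, hα⟩
  refine hreg (frobeniusAlgEquivOfAlgebraic k K ^ 2)
    (frobeniusAlgEquivOfAlgebraic_pow_ne_one two_pos (by omega))
    (comp_frobeniusAlgEquivOfAlgebraic_pow_eq_self fun x => ?_)
  obtain ⟨c, hc⟩ := Nat.two_mul_sub_one_dvd_sq_sub_one_of_odd hq
  rw [hc, pow_mul, pow_two_mul_card_sub_one_eq_one_of_sq_eq_comp_norm hα, one_pow]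
end
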